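/- arXiv:1501.03691 — 4 statements merged into one kernel-verified Lean document; each statement's English description precedes it below -/
import Mathlib

section
/- Let ι : C/ℤ × ℕ → C satisfy ι(ν+ℤ, j) ∈ ν+ℤ, ι(ν₁+ℤ,j₁)+ι(ν₂+ℤ,j₂)−ι(ν₁+ν₂+ℤ,j₁+j₂) ≥ 0, and ι(ℤ,0)=0. If f and g are generalized series (finite C̄-linear combinations of series in (x−α)^ν C̄[[x−α]][log(x−α)] with ν ∈ C) all of whose terms (x−α)^μ log(x−α)^j satisfy μ − ι(μ+ℤ,j) ≥ 0 (i.e. f and g are integral with respect to ι), then the product f·g is integral with respect to ι. -/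
/-! A nonzero coefficient of `f · g` at `(μ, j)` needs nonzero coefficients of `f` at
`(μ₁, j₁)` and of `g` at `(μ₂, j₂)` with `μ₁ + μ₂ = μ` and `j₁ + j₂ = j` (also when the
`finsum` defining the product has infinite support, as it is then `0`). Integrality of the
factors and superadditivity of `ι` then write `μ - ι(μ+ℤ, j)` as the sum of the three natural
numbers `μ₁ - ι(μ₁+ℤ, j₁)`, `μ₂ - ι(μ₂+ℤ, j₂)` and `ι(μ₁+ℤ, j₁) + ι(μ₂+ℤ, j₂) - ι(μ+ℤ, j)`. -/

open scoped Classical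

/-- The quotient group `C/ℤ`, where `ℤ` is embedded as the integer multiples of `1`. -/
abbrev CModZ (C : Type*) [Field C] := C ⧸ AddSubgroup.zmultiples (1 : C)

/-- The canonical projection `C → C/ℤ`. -/
def toCModZ {C : Type*} [Field C] (μ : C) : CModZ C := QuotientAddGroup.mk μ

/-- A function `ι : C/ℤ × ℕ → C` as in Definition 1 of the paper:
it chooses a representative of each class, is superadditive (the difference in
condition 2 is a nonnegative integer), and `ι(ℤ,0) = 0`. -/
structure IotaSpec (C : Type*) [Field C] where
  ι : CModZ C × ℕ → C
  rep : ∀ (ν : CModZ C) (j : ℕ), toCModZ (ι (ν, j)) = ν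
  superadd : ∀ (ν₁ ν₂ : CModZ C) (j₁ j₂ : ℕ),
    ∃ n : ℕ, ι (ν₁, j₁) + ι (ν₂, j₂) - ι (ν₁ + ν₂, j₁ + j₂) = (n : C)
  zero : ι (0, 0) = 0

/-- A term `(x-α)^μ log(x-α)^j` is integral iff `μ - ι(μ+ℤ, j) ≥ 0`,
interpreted as a nonnegative integer. -/
def IntegralTerm {C : Type*} [Field C] (I : IotaSpec C) (μ : C) (j : ℕ) : Prop :=
  ∃ n : ℕ, μ - I.ι (toCModZ μ, j) = (n : C)

/-- A generalized series, represented by its coefficient function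
`(μ, j) ↦` (coefficient of `(x-α)^μ log(x-α)^j`), is integral iff all terms occurring
with nonzero coefficient are integral. -/
def IsIntegralSeries {C : Type*} [Field C] {M : Type*} [Zero M]
    (I : IotaSpec C) (f : C × ℕ → M) : Prop :=
  ∀ p : C × ℕ, f p ≠ 0 → IntegralTerm I p.1 p.2

/-- A coefficient function represents an element of the ring `R` of finite linear
combinations of series from `(x-α)^ν C̄[[x-α]][log(x-α)]`, `ν ∈ C`: its support is
contained in a finite union of sets `(ν + ℕ) × {0,…,d}`. -/
def IsGenSeries {C : Type*} [Field C] {M : Type*} [Zero M] (f : C × ℕ → M) : Prop :=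
  ∃ (S : Finset C) (d : ℕ), ∀ p : C × ℕ, f p ≠ 0 →
    p.2 ≤ d ∧ ∃ ν ∈ S, ∃ n : ℕ, p.1 = ν + n

/-- Multiplication of generalized series (Cauchy product of coefficient functions):
exponents add and log-powers add. -/
noncomputable def gsMul {C : Type*} [Field C] {K : Type*} [Field K]
    (f g : C × ℕ → K) : C × ℕ → K :=
  fun p => ∑ᶠ q : C × ℕ, if q.2 ≤ p.2 then f q * g (p.1 - q.1, p.2 - q.2) else 0

theorem toCModZ_add {C : Type*} [Field C] (μ₁ μ₂ : C) :
    toCModZ (μ₁ + μ₂) = toCModZ μ₁ + toCModZ μ₂ :=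
  QuotientAddGroup.mk_add _ μ₁ μ₂

theorem IntegralTerm.add {C : Type*} [Field C] {I : IotaSpec C} {μ₁ μ₂ : C} {j₁ j₂ : ℕ}
    (h₁ : IntegralTerm I μ₁ j₁) (h₂ : IntegralTerm I μ₂ j₂) :
    IntegralTerm I (μ₁ + μ₂) (j₁ + j₂) := by
  obtain ⟨n₁, hn₁⟩ := h₁
  obtain ⟨n₂, hn₂⟩ := h₂
  obtain ⟨m, hm⟩ := I.superadd (toCModZ μ₁) (toCModZ μ₂) j₁ j₂
  refine ⟨n₁ + n₂ + m, ?_⟩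
  rw [toCModZ_add, Nat.cast_add, Nat.cast_add]
  linear_combination hn₁ + hn₂ + hm

theorem exists_ne_zero_of_gsMul_ne_zero {C : Type*} [Field C] {K : Type*} [Field K]
    {f g : C × ℕ → K} {p : C × ℕ} (hp : gsMul f g p ≠ 0) :
    ∃ q : C × ℕ, q.2 ≤ p.2 ∧ f q ≠ 0 ∧ g (p.1 - q.1, p.2 - q.2) ≠ 0 := by
  obtain ⟨q, hq⟩ := not_forall.mp (mt finsum_eq_zero_of_forall_eq_zero hp)
  split_ifs at hq with hle
  · exact ⟨q, hle, left_ne_zero_of_mul hq, right_ne_zero_of_mul hq⟩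
  · exact absurd rfl hq

theorem product_of_integral_is_integral_general {C : Type*} [Field C]
    {K : Type*} [Field K] (I : IotaSpec C) (f g : C × ℕ → K)
    (hfI : IsIntegralSeries I f) (hgI : IsIntegralSeries I g) :
    IsIntegralSeries I (gsMul f g) := by
  intro p hp
  obtain ⟨q, hle, hfq, hgq⟩ := exists_ne_zero_of_gsMul_ne_zero hp
  have hsum := (hfI q hfq).add (hgI _ hgq)
  rwa [add_sub_cancel, Nat.add_sub_cancel' hle] at hsum

/-- the product of two integral generalized series is integral. -/
theorem product_of_integral_is_integral {C : Type*} [Field C] [CharZero C]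
    {K : Type*} [Field K] (I : IotaSpec C) (f g : C × ℕ → K)
    (hf : IsGenSeries f) (hg : IsGenSeries g)
    (hfI : IsIntegralSeries I f) (hgI : IsIntegralSeries I g) :
    IsIntegralSeries I (gsMul f g) :=
  product_of_integral_is_integral_general I f g hfI hgI
end

section
/- Let L = ℓ₀ + ⋯ + ℓ_r D^r with polynomial coefficients, ℓ_r(0) ≠ 0, be an operator admitting a fundamental system b_i = x^i + O(x^r), i = 0,…,r−1, in C[[x]]. Let p₀,…,p_{r−1} ∈ C(x) be rational functions and suppose x divides the common denominator of p₀,…,p_{r−1}. Then there exists an index i and a solution b_i such that (p₀ + p₁D + ⋯ + p_{r−1}D^{r−1})·b_i, viewed as a formal Laurent series, has a pole at x = 0 (i.e. has a term x^{−e} with e > 0 and nonzero coefficient). -/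
/-!
Take `i` with `x ∤ a_i`. Since `b_i ≡ x^i` modulo `x^r`, the constant term of `D^j b_i` is
`j! · [j = i]` for `j < r`, so the numerator `∑ a_j D^j b_i` has constant term `a_i(0) · i! ≠ 0`
(characteristic zero), i.e. order `0`, while `x ∣ s` gives `s` positive order.
-/

open PowerSeries Nat

namespace PowerSeries

variable {R : Type*} [CommSemiring R]

theorem constantCoeff_sum_mul_iterate_derivative {r : ℕ} (a : Fin r → R⟦X⟧) {f : R⟦X⟧}
    (i : Fin r) (hf : ∀ j < r, coeff j f = if j = (i : ℕ) then 1 else 0) :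
    constantCoeff (∑ j : Fin r, a j * (d⁄dX R)^[j] f) = constantCoeff (a i) * (i ! : R) := by
  rw [map_sum, Finset.sum_eq_single i]
  · simp [constantCoeff_iterate_derivative, hf i i.isLt]
  · intro j _ hji
    simp [constantCoeff_iterate_derivative, hf j j.isLt, Fin.val_ne_of_ne hji]
  · simp

theorem order_lt_order_of_constantCoeff_ne_zero {f g : R⟦X⟧} (hf : constantCoeff f ≠ 0)
    (hg : constantCoeff g = 0) : f.order < g.order := by
  rw [not_not.mp (mt order_ne_zero_iff_constCoeff_eq_zero.mp hf), pos_iff_ne_zero]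
  exact order_ne_zero_iff_constCoeff_eq_zero.mpr hg

end PowerSeries

theorem pole_of_denominator_general
    {C : Type*} [Field C] [CharZero C] (r : ℕ)
    (b : Fin r → PowerSeries C)
    (hcoeff : ∀ i : Fin r, ∀ j < r,
        PowerSeries.coeff j (b i) = if j = (i : ℕ) then 1 else 0)
    (a : Fin r → Polynomial C) (s : Polynomial C)
    (hs : Polynomial.X ∣ s)
    (ha : ∃ j, ¬ Polynomial.X ∣ a j) :
    ∃ i : Fin r,
      (∑ j : Fin r,
          ((a j : PowerSeries C) * (PowerSeries.derivativeFun^[(j : ℕ)] (b i)))).order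
        < (s : PowerSeries C).order := by
  obtain ⟨i, hi⟩ := ha
  rw [Polynomial.X_dvd_iff] at hi hs
  have hnum : constantCoeff (∑ j : Fin r, (a j : C⟦X⟧) * (d⁄dX C)^[j] (b i)) ≠ 0 := by
    rw [constantCoeff_sum_mul_iterate_derivative _ i (hcoeff i), Polynomial.constantCoeff_coe]
    exact mul_ne_zero hi (Nat.cast_ne_zero.mpr (factorial_ne_zero i))
  exact ⟨i, order_lt_order_of_constantCoeff_ne_zero hnum (by rwa [Polynomial.constantCoeff_coe])⟩

/-- Let `L = ℓ₀ + ⋯ + ℓ_r D^r` with polynomial coefficients, `ℓ_r(0) ≠ 0`,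
admit a fundamental system `b_i = x^i + O(x^r)` in `C[[x]]`. Let the rational functions
`p_j = a_j / s` have common denominator `s` divisible by `x` (i.e. `x ∣ s` and some `a_j`
is not divisible by `x`). Then some `(p₀ + ⋯ + p_{r-1}D^{r-1})·b_i` has a pole at `0`:
the order of the numerator series `∑ a_j b_i^{(j)}` is strictly smaller than the order
of `s`, so a term `x^{-e}` with `e > 0` appears in the Laurent expansion. -/
theorem pole_of_denominator
    {C : Type*} [Field C] [CharZero C] (r : ℕ)
    (ℓ : Fin (r + 1) → Polynomial C)
    (hr : Polynomial.eval 0 (ℓ (Fin.last r)) ≠ 0)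
    (b : Fin r → PowerSeries C)
    (hsol : ∀ i, ∑ k : Fin (r + 1),
        ((ℓ k : PowerSeries C) * (PowerSeries.derivativeFun^[(k : ℕ)] (b i))) = 0)
    (hcoeff : ∀ i : Fin r, ∀ j < r,
        PowerSeries.coeff j (b i) = if j = (i : ℕ) then 1 else 0)
    (a : Fin r → Polynomial C) (s : Polynomial C)
    (hs : Polynomial.X ∣ s) (hs0 : s ≠ 0)
    (ha : ∃ j, ¬ Polynomial.X ∣ a j) :
    ∃ i : Fin r,
      (∑ j : Fin r,
          ((a j : PowerSeries C) * (PowerSeries.derivativeFun^[(j : ℕ)] (b i)))).order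
        < (s : PowerSeries C).order :=
  pole_of_denominator_general r b hcoeff a s hs ha
end

section
/- The formal power series f = 1 − (1/2)x − (1/24)x³ − ⋯ and g = x² + (1/6)x³ + ⋯ determined as the two power series solutions of the operator L = (2−x) + 2(2−2x+x²)D + 4(x−1)x D² are linearly independent over ℚ; equivalently, the solution space of L in ℚ[[x]] has dimension 2, i.e. equals the order of L, even though the leading coefficient 4(x−1)x vanishes at 0. -/
/-! Writing `h = ∑ aₙ xⁿ`, the equation `L h = 0` reads `2 a₀ + 4 a₁ = 0` at `x⁰`, the multiple
`-1/2` of that same relation at `x¹`, and `4 (n + 1) (n + 3) aₙ₊₃ = (4n² + 8n + 2) aₙ₊₂ + (2n + 1) aₙ₊₁`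
at `xⁿ⁺²`. So no equation determines `a₂`, while every later coefficient is forced: `a₀` and `a₂`
are free and determine `h`, and the solutions with `(a₀, a₂) = (1, 0)` and `(0, 1)` form a basis. -/

open PowerSeries

/-- The operator `L = (2−x) + 2(2−2x+x²)D + 4(x−1)x D²` acting on `ℚ[[x]]`. -/
noncomputable def Lop5 (f : PowerSeries ℚ) : PowerSeries ℚ :=
  (2 - X) * f + (4 - 4 * X + 2 * X ^ 2) * PowerSeries.derivativeFun f
    + (4 * X ^ 2 - 4 * X) * PowerSeries.derivativeFun (PowerSeries.derivativeFun f)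

namespace PowerSeries

theorem constantCoeff_derivative {R : Type*} [CommSemiring R] (f : R⟦X⟧) :
    constantCoeff (d⁄dX R f) = coeff 1 f := by
  simp [← coeff_zero_eq_constantCoeff_apply, coeff_derivative]

end PowerSeries

theorem Lop5_eq (h : ℚ⟦X⟧) : Lop5 h = C 2 * h + C 4 * d⁄dX ℚ h - X * h
      - C 4 * (X * d⁄dX ℚ h) - C 4 * (X * d⁄dX ℚ (d⁄dX ℚ h))
      + C 2 * (X ^ 2 * d⁄dX ℚ h) + C 4 * (X ^ 2 * d⁄dX ℚ (d⁄dX ℚ h)) := by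
  change (2 - X) * h + (4 - 4 * X + 2 * X ^ 2) * d⁄dX ℚ h
    + (4 * X ^ 2 - 4 * X) * d⁄dX ℚ (d⁄dX ℚ h) = _
  rw [map_ofNat C 2, map_ofNat C 4]
  ring

noncomputable def Lop5LinearMap : ℚ⟦X⟧ →ₗ[ℚ] ℚ⟦X⟧ :=
  let D : ℚ⟦X⟧ →ₗ[ℚ] ℚ⟦X⟧ := d⁄dX ℚ
  LinearMap.mulLeft ℚ (2 - X) + LinearMap.mulLeft ℚ (4 - 4 * X + 2 * X ^ 2) ∘ₗ D
    + LinearMap.mulLeft ℚ (4 * X ^ 2 - 4 * X) ∘ₗ D ∘ₗ D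

@[simp]
theorem Lop5LinearMap_apply (h : ℚ⟦X⟧) : Lop5LinearMap h = Lop5 h := rfl

theorem coeff_zero_Lop5 (h : ℚ⟦X⟧) : coeff 0 (Lop5 h) = 2 * coeff 0 h + 4 * coeff 1 h := by
  simp [Lop5_eq, constantCoeff_derivative]

theorem coeff_one_Lop5 (h : ℚ⟦X⟧) : coeff 1 (Lop5 h) = -coeff 0 (Lop5 h) / 2 := by
  rw [coeff_zero_Lop5]
  simp [Lop5_eq, coeff_derivative, coeff_X_pow_mul', coeff_succ_X_mul]
  ring

theorem coeff_add_two_Lop5 (h : ℚ⟦X⟧) (n : ℕ) :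
    coeff (n + 2) (Lop5 h) = (2 * n + 1) * coeff (n + 1) h
      + (4 * n ^ 2 + 8 * n + 2) * coeff (n + 2) h - 4 * (n + 1) * (n + 3) * coeff (n + 3) h := by
  simp [Lop5_eq, coeff_derivative, coeff_X_pow_mul', coeff_succ_X_mul]
  ring

theorem coeff_zero_Lop5_eq_zero_iff (h : ℚ⟦X⟧) :
    coeff 0 (Lop5 h) = 0 ↔ coeff 1 h = -coeff 0 h / 2 := by
  rw [coeff_zero_Lop5]
  constructor <;> intro hc <;> linarith

theorem coeff_add_two_Lop5_eq_zero_iff (h : ℚ⟦X⟧) (n : ℕ) :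
    coeff (n + 2) (Lop5 h) = 0 ↔ coeff (n + 3) h =
      ((4 * n ^ 2 + 8 * n + 2) * coeff (n + 2) h + (2 * n + 1) * coeff (n + 1) h)
        / (4 * (n + 1) * (n + 3)) := by
  rw [coeff_add_two_Lop5, eq_div_iff (by positivity)]
  constructor <;> intro hc <;> linarith

theorem Lop5_eq_zero_iff (h : ℚ⟦X⟧) : Lop5 h = 0 ↔ coeff 1 h = -coeff 0 h / 2 ∧
    ∀ n : ℕ, coeff (n + 3) h =
      ((4 * n ^ 2 + 8 * n + 2) * coeff (n + 2) h + (2 * n + 1) * coeff (n + 1) h)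
        / (4 * (n + 1) * (n + 3)) := by
  simp only [← coeff_zero_Lop5_eq_zero_iff, ← coeff_add_two_Lop5_eq_zero_iff]
  refine ⟨fun hh ↦ by simp [hh], fun ⟨h0, hn⟩ ↦ ext fun n ↦ ?_⟩
  match n with
  | 0 => simpa using h0
  | 1 => simp [coeff_one_Lop5, h0]
  | n + 2 => simpa using hn n

theorem eq_zero_of_Lop5_eq_zero {h : ℚ⟦X⟧} (hh : Lop5 h = 0) (h₀ : coeff 0 h = 0)
    (h₂ : coeff 2 h = 0) : h = 0 := by
  obtain ⟨h₁, hrec⟩ := (Lop5_eq_zero_iff h).mp hh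
  have hpair : ∀ n : ℕ, coeff (n + 1) h = 0 ∧ coeff (n + 2) h = 0 := by
    intro n
    induction n with
    | zero => exact ⟨by simpa [h₀] using h₁, h₂⟩
    | succ n ih => exact ⟨ih.2, by simp [hrec n, ih.1, ih.2]⟩
  ext n
  cases n with
  | zero => simpa using h₀
  | succ n => simpa using (hpair n).1

def solutionCoeff (c₀ c₂ : ℚ) : ℕ → ℚ
  | 0 => c₀
  | 1 => -c₀ / 2
  | 2 => c₂
  | n + 3 => ((4 * n ^ 2 + 8 * n + 2) * solutionCoeff c₀ c₂ (n + 2)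
      + (2 * n + 1) * solutionCoeff c₀ c₂ (n + 1)) / (4 * (n + 1) * (n + 3))

theorem Lop5_mk_solutionCoeff (c₀ c₂ : ℚ) : Lop5 (mk (solutionCoeff c₀ c₂)) = 0 :=
  (Lop5_eq_zero_iff _).mpr ⟨by simp [solutionCoeff], fun n ↦ by simp [solutionCoeff]⟩

theorem eq_smul_add_smul_of_Lop5_eq_zero {h : ℚ⟦X⟧} (hh : Lop5 h = 0) :
    h = coeff 0 h • mk (solutionCoeff 1 0) + coeff 2 h • mk (solutionCoeff 0 1) := by
  rw [← sub_eq_zero]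
  apply eq_zero_of_Lop5_eq_zero
  · rw [← Lop5LinearMap_apply, map_sub, map_add, map_smul, map_smul]
    simp [hh, Lop5_mk_solutionCoeff]
  · simp [solutionCoeff]
  · simp [solutionCoeff]

/-- the two power series solutions `f = 1 − x/2 − ⋯` and `g = x² + x³/6 + ⋯`
of `L = (2−x) + 2(2−2x+x²)D + 4(x−1)xD²` are linearly independent over `ℚ`; the solution
space of `L` in `ℚ[[x]]` is 2-dimensional, i.e. of dimension equal to the order of `L`,
even though the leading coefficient `4(x−1)x` vanishes at `0`. -/
theorem solution_space_dimension_two :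
    ∃ f g : PowerSeries ℚ,
      Lop5 f = 0 ∧ Lop5 g = 0 ∧
      PowerSeries.coeff 0 f = 1 ∧ PowerSeries.coeff 1 f = -(1/2) ∧
      PowerSeries.coeff 0 g = 0 ∧ PowerSeries.coeff 1 g = 0 ∧
      PowerSeries.coeff 2 g = 1 ∧
      LinearIndependent ℚ ![f, g] ∧
      ∀ h : PowerSeries ℚ, Lop5 h = 0 →
        h ∈ Submodule.span ℚ ({f, g} : Set (PowerSeries ℚ)) := by
  refine ⟨mk (solutionCoeff 1 0), mk (solutionCoeff 0 1), Lop5_mk_solutionCoeff 1 0,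
    Lop5_mk_solutionCoeff 0 1, by simp [solutionCoeff], by norm_num [solutionCoeff],
    by simp [solutionCoeff], by simp [solutionCoeff], by simp [solutionCoeff], ?_, ?_⟩
  · refine LinearIndependent.pair_iff.mpr fun s t hst ↦ ⟨?_, ?_⟩
    · simpa [solutionCoeff] using congrArg (coeff 0) hst
    · simpa [solutionCoeff] using congrArg (coeff 2) hst
  · intro h hh
    exact Submodule.mem_span_pair.mpr ⟨_, _, (eq_smul_add_smul_of_Lop5_eq_zero hh).symm⟩
end

section
/- If a generalized series h ∈ ⋃_{ν∈C}(x−α)^ν C̄[[x−α]][log(x−α)] is hyperexponential (i.e. satisfies a first-order linear ODE a h′ + b h = 0 with polynomial a ≠ 0, b) and nonzero, then h contains no logarithmic terms: h ∈ (x−α)^ν C̄[[x−α]] for some ν, with nonzero lowest coefficient; in particular h is invertible in the ring of such series. -/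
open scoped Classical

/-- The multiplicative unit of the ring of generalized series. -/
noncomputable def gsOne {C : Type*} [Field C] {K : Type*} [Field K] : C × ℕ → K :=
  fun p => if p = (0, 0) then 1 else 0

/-- Formal differentiation `D = d/dx` of generalized series:
`D((x-α)^μ log(x-α)^j) = μ (x-α)^{μ-1} log^j + j (x-α)^{μ-1} log^{j-1}`.
The exponents live in `C`, the coefficients in the extension field `K` of `C`. -/
noncomputable def gsDeriv {C : Type*} [Field C] {K : Type*} [Field K] [Algebra C K]
    (f : C × ℕ → K) : C × ℕ → K :=
  fun p => algebraMap C K (p.1 + 1) * f (p.1 + 1, p.2)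
    + ((p.2 : K) + 1) * f (p.1 + 1, p.2 + 1)

/-- Multiplication of a generalized series by a polynomial in `x - α`. -/
noncomputable def polyAct {C : Type*} [Field C] {K : Type*} [Field K]
    (q : Polynomial K) (f : C × ℕ → K) : C × ℕ → K :=
  fun p => ∑ k ∈ Finset.range (q.natDegree + 1), q.coeff k * f (p.1 - (k : C), p.2)

/-- The determinant of a matrix of generalized series, via the Leibniz formula. -/
noncomputable def gsDet {C : Type*} [Field C] {K : Type*} [Field K] {r : ℕ}
    (M : Fin r → Fin r → (C × ℕ → K)) : C × ℕ → K :=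
  fun p => ∑ σ : Equiv.Perm (Fin r),
    (Equiv.Perm.sign σ : ℤ) •
      (List.foldr gsMul gsOne (List.ofFn fun i => M i (σ i))) p

/-!
Let `s` be the order of `a` at `α` and let `μ` be an exponent of `h` that is minimal in its class
`μ + ℤ`. Comparing coefficients in `a h′ + b h = 0` just above `μ` shows that `b` has order at
least `s - 1`, and the coefficient of `(x-α)^{μ+s-1} log^j` then reads
`I(μ) h_{μ,j} + a_s (j+1) h_{μ,j+1} = 0` with the linear indicial polynomial
`I(μ) = a_s μ + b_{s-1}`. As the log degree is bounded, the top log term forces `I(μ) = 0`, and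
then every log term at `μ` vanishes. So all minimal exponents equal the single root `ν` of `I`,
and `h` is supported on `ν + ℕ`. At `ν + m`, `m > 0`, the same recurrence holds in log degrees
`j ≥ 1` with leading factor `I(ν + m) = a_s m ≠ 0`, so by induction on `m` no logarithms occur
at all. Hence `h = (x-α)^ν u` for a power series `u` with `u(0) ≠ 0`, whose inverse is
`(x-α)^{-ν} u⁻¹`.
-/

open Polynomial

theorem eq_zero_of_mul_add_mul_succ {R : Type*} [Semiring R] [NoZeroDivisors R] {f g : ℕ → R}
    {A : R} {d j₀ : ℕ} (hA : A ≠ 0) (hd : ∀ j, f j ≠ 0 → j ≤ d)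
    (hrec : ∀ j, j₀ ≤ j → A * f j + g j * f (j + 1) = 0) : ∀ j, j₀ ≤ j → f j = 0 := by
  suffices ∀ n j, j₀ ≤ j → d < j + n → f j = 0 from fun j hj => this (d + 1) j hj (by omega)
  intro n
  induction n with
  | zero => exact fun j _ hj => by_contra fun hf => absurd (hd j hf) (by omega)
  | succ n ih =>
    intro j hj₀ hj
    have hrec_j := hrec j hj₀
    rw [ih (j + 1) (by omega) (by omega), mul_zero, add_zero] at hrec_j
    exact (mul_eq_zero.mp hrec_j).resolve_left hA

section ODE

variable {C : Type*} [Field C] {K : Type*} [Field K]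

theorem polyAct_apply_eq_single (q : K[X]) (f : C × ℕ → K) (x : C) (j s : ℕ)
    (hq : ∀ k < s, q.coeff k = 0) (hf : ∀ k, s < k → f (x - k, j) = 0) :
    polyAct q f (x, j) = q.coeff s * f (x - s, j) := by
  refine Finset.sum_eq_single s (fun k _ hks => ?_) fun hs => ?_
  · rcases lt_or_gt_of_ne hks with hk | hk
    · rw [hq k hk, zero_mul]
    · rw [hf k hk, mul_zero]
  · rw [coeff_eq_zero_of_natDegree_lt (by simpa using hs), zero_mul]

variable [Algebra C K]

/-- The value at `μ` of the indicial polynomial `a_s μ + b_{s-1}` of `a D + b` at `α`, where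
`s` is the order of `a` at `α` and `b_{-1} = 0`. -/
noncomputable def indicial (a b : K[X]) (μ : K) : K :=
  a.coeff a.natTrailingDegree * μ + (X * b).coeff a.natTrailingDegree

/-- The coefficient of `(x-α)^{y+s-1} log^j` in `a h′ + b h`, once everything below `y` in log
degrees `j, j+1` vanishes and `b` has order at least `s - 1`. -/
theorem indicial_recurrence {h : C × ℕ → K} {a b : K[X]}
    (hode : ∀ p, polyAct a (gsDeriv h) p + polyAct b h p = 0)
    (hb : ∀ k, k + 1 < a.natTrailingDegree → b.coeff k = 0) {y : C} {j : ℕ}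
    (hvan : ∀ i : ℕ, 0 < i → h (y - i, j) = 0 ∧ h (y - i, j + 1) = 0) :
    indicial a b (algebraMap C K y) * h (y, j)
      + a.coeff a.natTrailingDegree * (j + 1) * h (y, j + 1) = 0 := by
  set s := a.natTrailingDegree
  have hA : polyAct a (gsDeriv h) (y + s - 1, j)
      = a.coeff s * (algebraMap C K y * h (y, j) + (j + 1) * h (y, j + 1)) := by
    rw [polyAct_apply_eq_single a _ _ j s (fun k hk => coeff_eq_zero_of_lt_natTrailingDegree hk)]
    · simp only [gsDeriv]
      rw [show y + s - 1 - s + 1 = y by ring]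
    · intro k hk
      have hpt : y + s - 1 - k + 1 = y - ((k - s : ℕ) : C) := by
        push_cast [Nat.cast_sub hk.le]; ring
      simp only [gsDeriv, hpt, (hvan _ (Nat.sub_pos_of_lt hk)).1,
        (hvan _ (Nat.sub_pos_of_lt hk)).2, mul_zero, add_zero]
  have hB : polyAct b h (y + s - 1, j) = (X * b).coeff s * h (y, j) := by
    rcases Nat.eq_zero_or_pos s with hs | hs
    · rw [hs, coeff_X_mul_zero, zero_mul]
      refine Finset.sum_eq_zero fun k _ => ?_
      rw [show y + ((0 : ℕ) : C) - 1 - k = y - ((k + 1 : ℕ) : C) by push_cast; ring,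
        (hvan _ k.succ_pos).1, mul_zero]
    · obtain ⟨t, ht⟩ := Nat.exists_eq_add_one_of_ne_zero hs.ne'
      rw [ht, coeff_X_mul, polyAct_apply_eq_single b h _ j t (fun k hk => hb k (by omega))]
      · rw [show y + ((t + 1 : ℕ) : C) - 1 - t = y by push_cast; ring]
      · intro k hk
        rw [show y + ((t + 1 : ℕ) : C) - 1 - k = y - ((k - t : ℕ) : C) by
          push_cast [Nat.cast_sub hk.le]; ring]
        exact (hvan _ (Nat.sub_pos_of_lt hk)).1
  have hode_at := hode (y + s - 1, j)
  rw [hA, hB] at hode_at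
  rw [indicial]
  linear_combination hode_at

end ODE

section MinExponent

variable {C : Type*} [Field C] {K : Type*} [Field K]

def IsMinExponent (h : C × ℕ → K) (μ : C) : Prop :=
  (∃ j, h (μ, j) ≠ 0) ∧ ∀ i : ℕ, 0 < i → ∀ j, h (μ - i, j) = 0

theorem exists_isMinExponent [CharZero C] {h : C × ℕ → K} (hgen : IsGenSeries h) {p : C × ℕ}
    (hp : h p ≠ 0) : ∃ μ, IsMinExponent h μ ∧ ∃ n : ℕ, p.1 = μ + n := by
  obtain ⟨S, _, hS⟩ := hgen
  have hfin : ((fun w : ℤ => p.1 + w) ⁻¹' S).Finite :=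
    S.finite_toSet.preimage fun w _ w' _ hw => by exact_mod_cast add_left_cancel hw
  obtain ⟨b, hb⟩ := hfin.bddBelow
  have hbdd : ∃ b : ℤ, ∀ z : ℤ, (∃ j, h (p.1 + z, j) ≠ 0) → b ≤ z := by
    refine ⟨b, fun z ⟨j, hj⟩ => ?_⟩
    obtain ⟨-, ν, hν, n, hn⟩ := hS _ hj
    have hzn : b ≤ z - n := hb (show p.1 + ((z - n : ℤ) : C) ∈ S by
      push_cast; rwa [← add_sub_assoc, show p.1 + z = ν + n from hn, add_sub_cancel_right])
    omega
  obtain ⟨z₀, ⟨j₀, hj₀⟩, hmin⟩ := Int.exists_least_of_bdd hbdd ⟨0, p.2, by simpa using hp⟩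
  obtain ⟨n, hn⟩ := Int.eq_ofNat_of_zero_le (neg_nonneg.mpr (hmin 0 ⟨p.2, by simpa using hp⟩))
  refine ⟨p.1 + z₀, ⟨⟨j₀, hj₀⟩, fun i hi j => by_contra fun hne => ?_⟩, n, ?_⟩
  · have := hmin (z₀ - i) ⟨j, by push_cast; rwa [← add_sub_assoc]⟩
    omega
  · have hcast : ((n : ℤ) : C) = ((-z₀ : ℤ) : C) := by rw [hn]
    push_cast at hcast
    rw [hcast]
    ring

end MinExponent

namespace IsMinExponent

variable {C : Type*} [Field C] {K : Type*} [Field K] [Algebra C K] {h : C × ℕ → K} {a b : K[X]}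
  {μ ν : C}

theorem coeff_eq_zero_of_succ_lt (hμ : IsMinExponent h μ)
    (hode : ∀ p, polyAct a (gsDeriv h) p + polyAct b h p = 0) :
    ∀ k, k + 1 < a.natTrailingDegree → b.coeff k = 0 := by
  obtain ⟨⟨j, hj⟩, hbelow⟩ := hμ
  intro k
  induction k using Nat.strong_induction_on with
  | _ k ih =>
  intro hk
  have hA : polyAct a (gsDeriv h) (μ + k, j) = 0 := by
    refine Finset.sum_eq_zero fun i _ => ?_
    rcases lt_or_ge i a.natTrailingDegree with hi | hi
    · rw [coeff_eq_zero_of_lt_natTrailingDegree hi, zero_mul]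
    · have hpt : μ + k - i + 1 = μ - ((i - k - 1 : ℕ) : C) := by
        push_cast [Nat.sub_sub, Nat.cast_sub (by omega : k + 1 ≤ i)]; ring
      simp only [gsDeriv, hpt, hbelow (i - k - 1) (by omega), mul_zero, add_zero]
  have hB : polyAct b h (μ + k, j) = b.coeff k * h (μ, j) := by
    rw [polyAct_apply_eq_single b h _ j k fun i hi => ih i hi (by omega)]
    · rw [add_sub_cancel_right]
    · intro i hi
      rw [show μ + k - i = μ - ((i - k : ℕ) : C) by push_cast [Nat.cast_sub hi.le]; ring]
      exact hbelow _ (Nat.sub_pos_of_lt hi) _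
  have hode_at := hode (μ + k, j)
  rw [hA, hB, zero_add] at hode_at
  exact (mul_eq_zero.mp hode_at).resolve_right hj

theorem recurrence (hμ : IsMinExponent h μ)
    (hode : ∀ p, polyAct a (gsDeriv h) p + polyAct b h p = 0) (j : ℕ) :
    indicial a b (algebraMap C K μ) * h (μ, j)
      + a.coeff a.natTrailingDegree * (j + 1) * h (μ, j + 1) = 0 :=
  indicial_recurrence hode (hμ.coeff_eq_zero_of_succ_lt hode) fun i hi =>
    ⟨hμ.2 i hi j, hμ.2 i hi (j + 1)⟩

theorem indicial_eq_zero (hμ : IsMinExponent h μ)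
    (hode : ∀ p, polyAct a (gsDeriv h) p + polyAct b h p = 0) {d : ℕ}
    (hd : ∀ p : C × ℕ, h p ≠ 0 → p.2 ≤ d) : indicial a b (algebraMap C K μ) = 0 := by
  by_contra hA
  obtain ⟨j, hj⟩ := hμ.1
  exact hj (eq_zero_of_mul_add_mul_succ hA (fun j => hd (μ, j))
    (fun j _ => hμ.recurrence hode j) j j.zero_le)

theorem apply_eq_zero_of_pos [CharZero K] (hμ : IsMinExponent h μ)
    (hode : ∀ p, polyAct a (gsDeriv h) p + polyAct b h p = 0) (ha : a ≠ 0) {d : ℕ}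
    (hd : ∀ p : C × ℕ, h p ≠ 0 → p.2 ≤ d) {j : ℕ} (hj : 0 < j) : h (μ, j) = 0 := by
  obtain ⟨j, rfl⟩ := Nat.exists_eq_add_one_of_ne_zero hj.ne'
  have hrec := hμ.recurrence hode j
  rw [hμ.indicial_eq_zero hode hd, zero_mul, zero_add] at hrec
  simpa [coeff_natTrailingDegree_ne_zero.mpr ha, Nat.cast_add_one_ne_zero] using hrec

theorem apply_zero_ne_zero [CharZero K] (hμ : IsMinExponent h μ)
    (hode : ∀ p, polyAct a (gsDeriv h) p + polyAct b h p = 0) (ha : a ≠ 0) {d : ℕ}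
    (hd : ∀ p : C × ℕ, h p ≠ 0 → p.2 ≤ d) : h (μ, 0) ≠ 0 := by
  obtain ⟨j, hj⟩ := hμ.1
  obtain rfl : j = 0 := by
    by_contra hj0
    exact hj (hμ.apply_eq_zero_of_pos hode ha hd (Nat.pos_of_ne_zero hj0))
  exact hj

theorem eq (hμ : IsMinExponent h μ) (hν : IsMinExponent h ν)
    (hode : ∀ p, polyAct a (gsDeriv h) p + polyAct b h p = 0) (ha : a ≠ 0) {d : ℕ}
    (hd : ∀ p : C × ℕ, h p ≠ 0 → p.2 ≤ d) : μ = ν := by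
  have hμ0 := hμ.indicial_eq_zero hode hd
  have hν0 := hν.indicial_eq_zero hode hd
  rw [indicial] at hμ0 hν0
  have hdiff : a.coeff a.natTrailingDegree * (algebraMap C K μ - algebraMap C K ν) = 0 := by
    linear_combination hμ0 - hν0
  exact (algebraMap C K).injective (sub_eq_zero.mp
    ((mul_eq_zero.mp hdiff).resolve_left (coeff_natTrailingDegree_ne_zero.mpr ha)))

theorem apply_add_natCast_eq_zero [CharZero K] (hν : IsMinExponent h ν)
    (hode : ∀ p, polyAct a (gsDeriv h) p + polyAct b h p = 0) (ha : a ≠ 0) {d : ℕ}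
    (hd : ∀ p : C × ℕ, h p ≠ 0 → p.2 ≤ d) (m : ℕ) {j : ℕ} (hj : 0 < j) :
    h (ν + m, j) = 0 := by
  induction m using Nat.strong_induction_on generalizing j with
  | _ m ih =>
  rcases Nat.eq_zero_or_pos m with rfl | hm
  · simpa using hν.apply_eq_zero_of_pos hode ha hd hj
  have hvan : ∀ j', 0 < j' → ∀ i : ℕ, 0 < i → h (ν + m - i, j') = 0 := by
    intro j' hj' i hi
    rcases le_or_gt i m with him | him
    · rw [show ν + m - i = ν + ((m - i : ℕ) : C) by push_cast [Nat.cast_sub him]; ring]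
      exact ih _ (by omega) hj'
    · rw [show ν + m - i = ν - ((i - m : ℕ) : C) by push_cast [Nat.cast_sub him.le]; ring]
      exact hν.2 _ (by omega) _
  have hind : indicial a b (algebraMap C K (ν + m)) = a.coeff a.natTrailingDegree * m := by
    have h0 := hν.indicial_eq_zero hode hd
    rw [indicial] at h0 ⊢
    rw [map_add, map_natCast]
    linear_combination h0
  have hA : a.coeff a.natTrailingDegree * (m : K) ≠ 0 :=
    mul_ne_zero (coeff_natTrailingDegree_ne_zero.mpr ha) (Nat.cast_ne_zero.mpr hm.ne')
  refine eq_zero_of_mul_add_mul_succ (g := fun j => a.coeff a.natTrailingDegree * (j + 1)) hA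
    (fun j => hd (ν + m, j)) (fun j' hj' => ?_) j hj
  rw [← hind]
  exact indicial_recurrence hode (hν.coeff_eq_zero_of_succ_lt hode) fun i hi =>
    ⟨hvan j' hj' i hi, hvan (j' + 1) j'.succ_pos i hi⟩

end IsMinExponent

section PowerSeries

variable {C : Type*} [Field C] {K : Type*} [Field K]

/-- The generalized series `(x-α)^ν u(x-α)`. -/
noncomputable def gsOfPowerSeries (ν : C) (u : PowerSeries K) : C × ℕ → K :=
  Function.extend (fun n : ℕ => (ν + n, 0)) (fun n => PowerSeries.coeff n u) 0

theorem gsOfPowerSeries_apply [CharZero C] (ν : C) (u : PowerSeries K) (n : ℕ) :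
    gsOfPowerSeries ν u (ν + n, 0) = PowerSeries.coeff n u := by
  refine Function.Injective.extend_apply (fun m n hmn => ?_) _ _ n
  exact_mod_cast add_left_cancel (Prod.ext_iff.mp hmn).1

theorem gsOfPowerSeries_apply_of_forall_ne {ν : C} {u : PowerSeries K} {p : C × ℕ}
    (hp : ∀ n : ℕ, p ≠ (ν + n, 0)) : gsOfPowerSeries ν u p = 0 :=
  Function.extend_apply' _ _ _ fun ⟨n, hn⟩ => hp n hn.symm

theorem exists_eq_of_gsOfPowerSeries_ne_zero {ν : C} {u : PowerSeries K} {p : C × ℕ}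
    (hp : gsOfPowerSeries ν u p ≠ 0) : ∃ n : ℕ, p = (ν + n, 0) := by
  by_contra hne
  exact hp (gsOfPowerSeries_apply_of_forall_ne (not_exists.mp hne))

open Finset in
theorem gsMul_gsOfPowerSeries [CharZero C] (ν μ : C) (u v : PowerSeries K) :
    gsMul (gsOfPowerSeries ν u) (gsOfPowerSeries μ v) = gsOfPowerSeries (ν + μ) (u * v) := by
  ext ⟨x, j⟩
  set F := fun q : C × ℕ => if q.2 ≤ j then
    gsOfPowerSeries ν u q * gsOfPowerSeries μ v (x - q.1, j - q.2) else 0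
  have hsupp : ∀ q, F q ≠ 0 → ∃ i k : ℕ, q = (ν + i, 0) ∧ x = ν + μ + (i + k : ℕ) ∧ j = 0 := by
    intro q hq
    have hq' : gsOfPowerSeries ν u q * gsOfPowerSeries μ v (x - q.1, j - q.2) ≠ 0 := by
      by_contra h0
      exact hq (by simp only [F, h0, ite_self])
    obtain ⟨i, rfl⟩ := exists_eq_of_gsOfPowerSeries_ne_zero (left_ne_zero_of_mul hq')
    obtain ⟨k, hk⟩ := exists_eq_of_gsOfPowerSeries_ne_zero (right_ne_zero_of_mul hq')
    simp only [Prod.mk.injEq, Nat.sub_zero] at hk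
    exact ⟨i, k, rfl, by push_cast; linear_combination hk.1, hk.2⟩
  by_cases hp : ∃ N : ℕ, x = ν + μ + N ∧ j = 0
  · obtain ⟨N, rfl, rfl⟩ := hp
    rw [gsOfPowerSeries_apply, PowerSeries.coeff_mul]
    have hsub : Function.support F ⊆
        ((antidiagonal N).image fun ik => ((ν + ik.1, 0) : C × ℕ) : Finset (C × ℕ)) := by
      intro q hq
      obtain ⟨i, k, rfl, hx, -⟩ := hsupp q hq
      have hN : N = i + k := by exact_mod_cast add_left_cancel hx
      simp only [coe_image, Set.mem_image, mem_coe, HasAntidiagonal.mem_antidiagonal]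
      exact ⟨(i, k), hN.symm, rfl⟩
    rw [gsMul, finsum_eq_sum_of_support_subset F hsub, sum_image]
    · refine sum_congr rfl fun ik hik => ?_
      rw [HasAntidiagonal.mem_antidiagonal] at hik
      have hpt : ν + μ + (N : C) - (ν + ik.1) = μ + ik.2 := by rw [← hik]; push_cast; ring
      simp only [F, le_refl, if_true, Nat.sub_zero, hpt, gsOfPowerSeries_apply]
    · intro ik hik ik' hik' h
      rw [mem_coe, HasAntidiagonal.mem_antidiagonal] at hik hik'
      have h1 : ik.1 = ik'.1 := by exact_mod_cast add_left_cancel (Prod.ext_iff.mp h).1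
      exact Prod.ext h1 (by omega)
  · have hF : F = 0 := by
      funext q
      by_contra hq
      obtain ⟨i, k, -, hx, hj⟩ := hsupp q hq
      exact hp ⟨i + k, hx, hj⟩
    rw [gsMul, show (fun q => _) = F from rfl, hF, Pi.zero_def, finsum_zero, eq_comm]
    exact gsOfPowerSeries_apply_of_forall_ne fun N hN =>
      hp ⟨N, (Prod.ext_iff.mp hN).1, (Prod.ext_iff.mp hN).2⟩

theorem gsOne_eq_gsOfPowerSeries [CharZero C] : (gsOne : C × ℕ → K) = gsOfPowerSeries 0 1 := by
  ext p
  by_cases hp : ∃ n : ℕ, p = ((0 : C) + n, 0)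
  · obtain ⟨n, rfl⟩ := hp
    rw [gsOfPowerSeries_apply, PowerSeries.coeff_one, gsOne, zero_add]
    simp
  · rw [gsOfPowerSeries_apply_of_forall_ne (not_exists.mp hp), gsOne,
      if_neg fun h0 => hp ⟨0, by simpa using h0⟩]

theorem eq_gsOfPowerSeries [CharZero C] {h : C × ℕ → K} {ν : C}
    (hh : ∀ p : C × ℕ, h p ≠ 0 → p.2 = 0 ∧ ∃ k : ℕ, p.1 = ν + k) :
    h = gsOfPowerSeries ν (PowerSeries.mk fun n => h (ν + n, 0)) := by
  ext p
  by_cases hp : ∃ n : ℕ, p = (ν + n, 0)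
  · obtain ⟨n, rfl⟩ := hp
    rw [gsOfPowerSeries_apply, PowerSeries.coeff_mk]
  · rw [gsOfPowerSeries_apply_of_forall_ne (not_exists.mp hp)]
    by_contra hne
    obtain ⟨h2, k, hk⟩ := hh p hne
    exact hp ⟨k, Prod.ext hk h2⟩

theorem exists_gsMul_eq_gsOne [CharZero C] {h : C × ℕ → K} {ν : C}
    (hh : ∀ p : C × ℕ, h p ≠ 0 → p.2 = 0 ∧ ∃ k : ℕ, p.1 = ν + k) (h0 : h (ν, 0) ≠ 0) :
    ∃ g : C × ℕ → K, (∀ p : C × ℕ, g p ≠ 0 → p.2 = 0) ∧ gsMul h g = gsOne := by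
  set u := PowerSeries.mk fun n => h (ν + n, 0)
  have hu : PowerSeries.constantCoeff u ≠ 0 := by simpa [u] using h0
  refine ⟨gsOfPowerSeries (-ν) u⁻¹, fun p hp => ?_, ?_⟩
  · obtain ⟨n, rfl⟩ := exists_eq_of_gsOfPowerSeries_ne_zero hp
    rfl
  · rw [show h = gsOfPowerSeries ν u from eq_gsOfPowerSeries hh, gsMul_gsOfPowerSeries,
      add_neg_cancel, PowerSeries.mul_inv_cancel u hu, gsOne_eq_gsOfPowerSeries]

end PowerSeries

/-- a nonzero hyperexponential generalized series `h` (satisfying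
`a h′ + b h = 0` with polynomials `a ≠ 0`, `b`) contains no logarithmic terms:
`h ∈ (x-α)^ν C̄[[x-α]]` for some `ν`, with nonzero lowest coefficient; in particular
`h` is invertible in the ring of generalized series. -/
theorem hyperexponential_no_logs
    {C : Type*} [Field C] [CharZero C] {K : Type*} [Field K] [Algebra C K]
    (h : C × ℕ → K) (hgen : IsGenSeries h) (hne : h ≠ 0)
    (a b : Polynomial K) (ha : a ≠ 0)
    (hode : (fun p : C × ℕ => polyAct a (gsDeriv h) p + polyAct b h p) = 0) :
    ∃ ν : C,
      (∀ p : C × ℕ, h p ≠ 0 → p.2 = 0 ∧ ∃ k : ℕ, p.1 = ν + (k : C)) ∧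
      h (ν, 0) ≠ 0 ∧
      ∃ g : C × ℕ → K, (∀ p : C × ℕ, g p ≠ 0 → p.2 = 0) ∧ gsMul h g = gsOne := by
  have : CharZero K := charZero_of_injective_algebraMap (algebraMap C K).injective
  have hode' : ∀ p, polyAct a (gsDeriv h) p + polyAct b h p = 0 := congrFun hode
  have ⟨_, d, hS⟩ := hgen
  have hd : ∀ p : C × ℕ, h p ≠ 0 → p.2 ≤ d := fun p hp => (hS p hp).1
  obtain ⟨p₀, hp₀⟩ := Function.ne_iff.mp hne
  obtain ⟨ν, hν, -⟩ := exists_isMinExponent hgen hp₀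
  have hsupp : ∀ p : C × ℕ, h p ≠ 0 → p.2 = 0 ∧ ∃ k : ℕ, p.1 = ν + k := by
    intro p hp
    obtain ⟨μ, hμ, n, hn⟩ := exists_isMinExponent hgen hp
    obtain rfl := hμ.eq hν hode' ha hd
    refine ⟨by_contra fun hp2 => hp ?_, n, hn⟩
    rw [← Prod.mk.eta (p := p), hn]
    exact hν.apply_add_natCast_eq_zero hode' ha hd n (Nat.pos_of_ne_zero hp2)
  have h0 := hν.apply_zero_ne_zero hode' ha hd
  exact ⟨ν, hsupp, h0, exists_gsMul_eq_gsOne hsupp h0⟩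
end
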